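/- arXiv:1610.03384 — 2 statements merged into one kernel-verified Lean document; each statement's English description precedes it below -/
import Mathlib

section
/- Let p be an odd prime, A, B integers with p ∤ B·(A²−4B), and Δ = A²−4B. Then v_{p−(Δ/p)}(A,B) ≡ B^{(1−(Δ/p))/2}·(B^{p−1} + 1) (mod p²). -/
/-- Lucas sequence `u n (A, B)`: `u 0 = 0`, `u 1 = 1`, `u (n+2) = A * u (n+1) - B * u n`. -/
def lucasU (A B : ℤ) : ℕ → ℤ
  | 0 => 0
  | 1 => 1
  | n + 2 => A * lucasU A B (n + 1) - B * lucasU A B n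

/-- Companion Lucas sequence `v n (A, B)`: `v 0 = 2`, `v 1 = A`, `v (n+2) = A * v (n+1) - B * v n`. -/
def lucasV (A B : ℤ) : ℕ → ℤ
  | 0 => 2
  | 1 => A
  | n + 2 => A * lucasV A B (n + 1) - B * lucasV A B n

/-!
Let `α, β` be the roots of `X² - A X + B` in an algebraically closed field, so that
`v_n = αⁿ + βⁿ` and `(α - β) u_n = αⁿ - βⁿ`. In characteristic `p` the Frobenius fixes `α + β`
and multiplies `α - β` by `(α - β)^(p-1) = Δ^((p-1)/2) = (Δ/p) =: ε`. Hence `α^(p-ε) = β^(p-ε) = B^k`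
where `ε = 1 - 2k`, which gives `u_{p-ε} ≡ 0` and `v_{p-ε} ≡ 2 B^k (mod p)`. With
`c = B^k (B^(p-1) + 1)`, the norm identity `v_n² - Δ u_n² = 4 Bⁿ` and Fermat's `p ∣ B^(p-1) - 1`
give `v_{p-ε}² ≡ c² (mod p²)`; as `v_{p-ε} + c ≡ 4 B^k` is prime to `p`, `v_{p-ε} ≡ c (mod p²)`.
-/

open Polynomial in
theorem exists_add_eq_and_mul_eq {F : Type*} [Field F] [IsAlgClosed F] (a b : F) :
    ∃ α β : F, α + β = a ∧ α * β = b := by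
  have hdeg : (X ^ 2 - C a * X + C b : F[X]).degree = 2 := by compute_degree!
  obtain ⟨α, hα⟩ := IsAlgClosed.exists_root _ (by rw [hdeg]; decide)
  refine ⟨α, a - α, by ring, ?_⟩
  simp only [IsRoot, eval_add, eval_sub, eval_pow, eval_mul, eval_C, eval_X] at hα
  linear_combination -hα

theorem Int.sq_dvd_sub_of_sq_dvd_sq_sub_sq {p x y : ℤ} (hp : Prime p)
    (h : p ^ 2 ∣ x ^ 2 - y ^ 2) (hxy : ¬ p ∣ x + y) : p ^ 2 ∣ x - y :=
  ((hp.coprime_iff_not_dvd.mpr hxy).pow_left).dvd_of_dvd_mul_left (by rwa [← sq_sub_sq])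

section Binet

variable {R : Type*} [CommRing R] {A B : ℤ} {α β : R}

theorem lucasV_eq_pow_add_pow (hsum : α + β = A) (hprod : α * β = B) (n : ℕ) :
    (lucasV A B n : R) = α ^ n + β ^ n := by
  induction n using Nat.twoStepInduction with
  | zero => norm_num [lucasV]
  | one => simp [lucasV, hsum]
  | more n ih₀ ih₁ =>
    rw [lucasV, Int.cast_sub, Int.cast_mul, Int.cast_mul, ih₁, ih₀, ← hsum, ← hprod]
    ring

theorem sub_mul_lucasU_eq_pow_sub_pow (hsum : α + β = A) (hprod : α * β = B) (n : ℕ) :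
    (α - β) * lucasU A B n = α ^ n - β ^ n := by
  induction n using Nat.twoStepInduction with
  | zero => simp [lucasU]
  | one => simp [lucasU]
  | more n ih₀ ih₁ =>
    rw [lucasU, Int.cast_sub, Int.cast_mul, Int.cast_mul, ← hsum, ← hprod]
    linear_combination (α + β) * ih₁ - α * β * ih₀

theorem sub_sq_eq_discr (hsum : α + β = A) (hprod : α * β = B) :
    (α - β) ^ 2 = ((A ^ 2 - 4 * B : ℤ) : R) := by
  push_cast
  rw [← hsum, ← hprod]
  ring

end Binet

theorem lucasV_sq_sub_mul_lucasU_sq (A B : ℤ) (n : ℕ) :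
    lucasV A B n ^ 2 - (A ^ 2 - 4 * B) * lucasU A B n ^ 2 = 4 * B ^ n := by
  obtain ⟨α, β, hsum, hprod⟩ := exists_add_eq_and_mul_eq (A : ℂ) (B : ℂ)
  have hU := sub_mul_lucasU_eq_pow_sub_pow hsum hprod n
  apply Int.cast_injective (α := ℂ)
  rw [Int.cast_sub, Int.cast_mul, ← sub_sq_eq_discr hsum hprod]
  push_cast
  rw [lucasV_eq_pow_add_pow hsum hprod, ← hprod]
  linear_combination (-((α - β) * lucasU A B n + (α ^ n - β ^ n))) * hU

theorem sq_dvd_lucasV_sub {A B : ℤ} {p : ℕ} (hp : p.Prime) (hp2 : p ≠ 2) (hB : ¬ (p : ℤ) ∣ B)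
    {k : ℕ} (hU : (p : ℤ) ∣ lucasU A B (p - 1 + 2 * k))
    (hV : (p : ℤ) ∣ lucasV A B (p - 1 + 2 * k) - 2 * B ^ k) :
    (p : ℤ) ^ 2 ∣ lucasV A B (p - 1 + 2 * k) - B ^ k * (B ^ (p - 1) + 1) := by
  have hpZ := Nat.prime_iff_prime_int.mp hp
  have hFermat : (p : ℤ) ∣ B ^ (p - 1) - 1 :=
    (Int.ModEq.pow_card_sub_one_eq_one hp ((hpZ.coprime_iff_not_dvd.mpr hB).symm)).symm.dvd
  apply Int.sq_dvd_sub_of_sq_dvd_sq_sub_sq hpZ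
  · have hnorm := lucasV_sq_sub_mul_lucasU_sq A B (p - 1 + 2 * k)
    rw [show lucasV A B (p - 1 + 2 * k) ^ 2 - (B ^ k * (B ^ (p - 1) + 1)) ^ 2 =
        (A ^ 2 - 4 * B) * lucasU A B (p - 1 + 2 * k) ^ 2 - (B ^ k * (B ^ (p - 1) - 1)) ^ 2 by
      linear_combination hnorm]
    exact dvd_sub (dvd_mul_of_dvd_right (pow_dvd_pow_of_dvd hU 2) _)
      (pow_dvd_pow_of_dvd (dvd_mul_of_dvd_right hFermat _) 2)
  · intro hsum
    have h4 : (p : ℤ) ∣ 2 ^ 2 * B ^ k := by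
      rw [show 2 ^ 2 * B ^ k = lucasV A B (p - 1 + 2 * k) + B ^ k * (B ^ (p - 1) + 1) -
          (lucasV A B (p - 1 + 2 * k) - 2 * B ^ k) - B ^ k * (B ^ (p - 1) - 1) by ring]
      exact dvd_sub (dvd_sub hsum hV) (dvd_mul_of_dvd_right hFermat _)
    rcases hpZ.dvd_or_dvd h4 with h2 | hBk
    · exact hp2 ((Nat.prime_dvd_prime_iff_eq hp Nat.prime_two).mp
        (Int.natCast_dvd_natCast.mp (hpZ.dvd_of_dvd_pow h2)))
    · exact hB (hpZ.dvd_of_dvd_pow hBk)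

section Frobenius

variable {R : Type*} [CommRing R] {p : ℕ} [CharP R p] {A B : ℤ} {α β : R}

theorem ne_of_not_dvd_discr (hsum : α + β = A) (hprod : α * β = B)
    (hΔ : ¬ (p : ℤ) ∣ A ^ 2 - 4 * B) : α ≠ β := by
  intro hαβ
  apply hΔ
  rw [← CharP.intCast_eq_zero_iff R p, ← sub_sq_eq_discr hsum hprod, hαβ, sub_self, sq, mul_zero]

theorem dvd_lucasU_and_dvd_lucasV_sub_of_pow_eq [IsDomain R] (hsum : α + β = A)
    (hprod : α * β = B) (hne : α ≠ β) {n : ℕ} {c : ℤ} (hα : α ^ n = c) (hβ : β ^ n = c) :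
    (p : ℤ) ∣ lucasU A B n ∧ (p : ℤ) ∣ lucasV A B n - 2 * c := by
  simp only [← CharP.intCast_eq_zero_iff R p, Int.cast_sub, Int.cast_mul, Int.cast_ofNat]
  constructor
  · have hU := sub_mul_lucasU_eq_pow_sub_pow hsum hprod n
    rw [hα, hβ, sub_self] at hU
    exact (mul_eq_zero.mp hU).resolve_left (sub_ne_zero.mpr hne)
  · rw [lucasV_eq_pow_add_pow hsum hprod, hα, hβ]
    ring

variable [hp : Fact p.Prime]

theorem intCast_pow_char (x : ℤ) : (x : R) ^ p = x := by
  simpa only [map_pow, map_intCast] using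
    congrArg (ZMod.castHom (dvd_refl p) R) (ZMod.pow_card (x : ZMod p))

theorem intCast_legendreSym (a : ℤ) : (legendreSym p a : R) = (a : R) ^ (p / 2) := by
  simpa only [map_pow, map_intCast] using
    congrArg (ZMod.castHom (dvd_refl p) R) (legendreSym.eq_pow p a)

theorem pow_char_add_pow_char (hsum : α + β = A) : α ^ p + β ^ p = α + β := by
  rw [← add_pow_char, hsum, intCast_pow_char]

theorem pow_char_sub_pow_char (hp2 : p ≠ 2) (hsum : α + β = A) (hprod : α * β = B) :
    α ^ p - β ^ p = legendreSym p (A ^ 2 - 4 * B) * (α - β) := by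
  have hodd : 2 * (p / 2) + 1 = p :=
    Nat.two_mul_div_two_add_one_of_odd (hp.out.odd_of_ne_two hp2)
  rw [← sub_pow_char, intCast_legendreSym, ← sub_sq_eq_discr hsum hprod, ← pow_mul, ← pow_succ, hodd]

variable [IsDomain R]

theorem dvd_lucasU_sub_one_and_lucasV_sub_one_sub_two (hp2 : p ≠ 2) (hsum : α + β = A)
    (hprod : α * β = B) (hB : ¬ (p : ℤ) ∣ B) (hΔ : ¬ (p : ℤ) ∣ A ^ 2 - 4 * B)
    (hε : legendreSym p (A ^ 2 - 4 * B) = 1) :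
    (p : ℤ) ∣ lucasU A B (p - 1) ∧ (p : ℤ) ∣ lucasV A B (p - 1) - 2 := by
  have h2 : (2 : R) ≠ 0 := Ring.two_ne_zero (by rwa [ringChar.eq R p])
  have hsum' := pow_char_add_pow_char hsum
  have hdiff := pow_char_sub_pow_char hp2 hsum hprod
  rw [hε, Int.cast_one, one_mul] at hdiff
  have hαp : α ^ p = α := mul_left_cancel₀ h2 (by linear_combination hsum' + hdiff)
  have hβp : β ^ p = β := mul_left_cancel₀ h2 (by linear_combination hsum' - hdiff)
  have hαβ : α * β ≠ 0 := hprod ▸ (CharP.intCast_eq_zero_iff R p B).not.mpr hB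
  have hpow {γ : R} (hγ : γ ≠ 0) (hγp : γ ^ p = γ) : γ ^ (p - 1) = ((1 : ℤ) : R) :=
    mul_right_cancel₀ hγ (by rw [pow_sub_one_mul hp.out.ne_zero, hγp, Int.cast_one, one_mul])
  simpa only [mul_one] using dvd_lucasU_and_dvd_lucasV_sub_of_pow_eq hsum hprod
    (ne_of_not_dvd_discr hsum hprod hΔ) (hpow (left_ne_zero_of_mul hαβ) hαp)
    (hpow (right_ne_zero_of_mul hαβ) hβp)

theorem dvd_lucasU_add_one_and_lucasV_add_one_sub_two_mul (hp2 : p ≠ 2) (hsum : α + β = A)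
    (hprod : α * β = B) (hΔ : ¬ (p : ℤ) ∣ A ^ 2 - 4 * B)
    (hε : legendreSym p (A ^ 2 - 4 * B) = -1) :
    (p : ℤ) ∣ lucasU A B (p + 1) ∧ (p : ℤ) ∣ lucasV A B (p + 1) - 2 * B := by
  have h2 : (2 : R) ≠ 0 := Ring.two_ne_zero (by rwa [ringChar.eq R p])
  have hsum' := pow_char_add_pow_char hsum
  have hdiff := pow_char_sub_pow_char hp2 hsum hprod
  rw [hε, Int.cast_neg, Int.cast_one, neg_one_mul] at hdiff
  have hαp : α ^ p = β := mul_left_cancel₀ h2 (by linear_combination hsum' + hdiff)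
  have hβp : β ^ p = α := mul_left_cancel₀ h2 (by linear_combination hsum' - hdiff)
  refine dvd_lucasU_and_dvd_lucasV_sub_of_pow_eq hsum hprod (ne_of_not_dvd_discr hsum hprod hΔ)
    ?_ ?_
  · rw [pow_succ, hαp, mul_comm, hprod]
  · rw [pow_succ, hβp, hprod]

end Frobenius

theorem lucasV_congr (A B : ℤ) (p : ℕ) [Fact p.Prime] (hp2 : p ≠ 2)
    (h : ¬ (p : ℤ) ∣ B * (A ^ 2 - 4 * B)) :
    ((p : ℤ) ^ 2) ∣
      lucasV A B ((p : ℤ) - legendreSym p (A ^ 2 - 4 * B)).toNat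
        - B ^ (((1 - legendreSym p (A ^ 2 - 4 * B)) / 2).toNat) * (B ^ (p - 1) + 1) := by
  have hp : p.Prime := Fact.out
  have hB : ¬ (p : ℤ) ∣ B := fun hd => h (hd.mul_right _)
  have hΔ : ¬ (p : ℤ) ∣ A ^ 2 - 4 * B := fun hd => h (hd.mul_left _)
  obtain ⟨α, β, hsum, hprod⟩ := exists_add_eq_and_mul_eq (A : AlgebraicClosure (ZMod p)) B
  rcases legendreSym.eq_one_or_neg_one p ((ZMod.intCast_zmod_eq_zero_iff_dvd _ p).not.mpr hΔ)
    with hε | hε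
  · obtain ⟨hU, hV⟩ := dvd_lucasU_sub_one_and_lucasV_sub_one_sub_two hp2 hsum hprod hB hΔ hε
    have key := sq_dvd_lucasV_sub hp hp2 hB (k := 0) hU (by simpa using hV)
    rw [hε, show ((p : ℤ) - 1).toNat = p - 1 by omega]
    simpa using key
  · obtain ⟨hU, hV⟩ := dvd_lucasU_add_one_and_lucasV_add_one_sub_two_mul hp2 hsum hprod hΔ hε
    have hidx : p - 1 + 2 * 1 = p + 1 := by have := hp.two_le; omega
    have key := sq_dvd_lucasV_sub hp hp2 hB (k := 1) (hidx ▸ hU) (by rwa [hidx, pow_one])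
    rw [hε, show ((p : ℤ) - -1).toNat = p + 1 by omega, ← hidx]
    simpa using key
end

section
/- For any integer m and positive integer n, 2·∑_{r=0}^{n−1} C(2n−1, r)·v_{n−r}(m−2, 1) = (m−4)·∑_{k=0}^{n−1} C(2k, k)·m^{n−1−k} + m^n. -/
open Finset

lemma lucasV_step (m : ℤ) (k : ℕ) :
    lucasV (m - 2) 1 (k + 2) = (m - 2) * lucasV (m - 2) 1 (k + 1) - lucasV (m - 2) 1 k := by
  simp [lucasV]

lemma m_mul_v (m : ℤ) (n r : ℕ) (h : r < n) :
    m * lucasV (m-2) 1 (n - r)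
      = lucasV (m-2) 1 (n + 1 - r) + 2 * lucasV (m-2) 1 (n - r) + lucasV (m-2) 1 (n - 1 - r) := by
  obtain ⟨k, hk⟩ : ∃ k, n - r = k + 1 := ⟨n - r - 1, by omega⟩
  have h1 : n + 1 - r = k + 2 := by omega
  have h2 : n - 1 - r = k := by omega
  rw [hk, h1, h2, lucasV_step]
  ring

lemma pascal2 (N r : ℕ) :
    Nat.choose (N+2) (r+2) = Nat.choose N (r+2) + 2 * Nat.choose N (r+1) + Nat.choose N r := by
  simp [Nat.choose_succ_succ]
  ring

lemma Erec (m : ℤ) (k : ℕ) :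
    ∑ r ∈ range (k+3), (Nat.choose (2*k+5) r : ℤ) * lucasV (m-2) 1 (k+3-r)
      = m * ∑ r ∈ range (k+2), (Nat.choose (2*k+3) r : ℤ) * lucasV (m-2) 1 (k+2-r)
        + (m - 4) * (Nat.choose (2*k+3) (k+1) : ℤ) := by
  set v := lucasV (m-2) 1 with hv
  have hsym : Nat.choose (2*k+3) (k+2) = Nat.choose (2*k+3) (k+1) := by
    have := Nat.choose_symm (n := 2*k+3) (k := k+1) (by omega)
    have h2 : 2*k+3 - (k+1) = k+2 := by omega
    rw [h2] at this
    exact this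
  have hv1 : v 1 = m - 2 := rfl
  have hv0 : v 0 = 2 := rfl
  -- LHS transformation
  have hL : ∑ r ∈ range (k+3), (Nat.choose (2*k+5) r : ℤ) * v (k+3-r)
      = (∑ r ∈ range (k+1), (Nat.choose (2*k+3) (r+2) : ℤ) * v (k+1-r))
        + 2 * (∑ r ∈ range (k+1), (Nat.choose (2*k+3) (r+1) : ℤ) * v (k+1-r))
        + (∑ r ∈ range (k+1), (Nat.choose (2*k+3) r : ℤ) * v (k+1-r))
        + (2*(k:ℤ)+5) * v (k+2) + v (k+3) := by
    rw [Finset.sum_range_succ', Finset.sum_range_succ']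
    have hterm : ∀ r ∈ range (k+1),
        (Nat.choose (2*k+5) (r+1+1) : ℤ) * v (k+3-(r+1+1))
          = (Nat.choose (2*k+3) (r+2) : ℤ) * v (k+1-r)
            + 2 * ((Nat.choose (2*k+3) (r+1) : ℤ) * v (k+1-r))
            + (Nat.choose (2*k+3) r : ℤ) * v (k+1-r) := by
      intro r _
      have h1 : k+3-(r+1+1) = k+1-r := by omega
      have h2 : 2*k+5 = (2*k+3)+2 := by omega
      rw [h1, h2, pascal2]
      push_cast
      ring
    rw [Finset.sum_congr rfl hterm]
    rw [Finset.sum_add_distrib, Finset.sum_add_distrib, ← Finset.mul_sum]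
    have h3 : k+3-(0+1) = k+2 := by omega
    have h4 : k+3-0 = k+3 := by omega
    rw [h3, h4]
    push_cast [Nat.choose_one_right, Nat.choose_zero_right]
    ring
  rw [hL]
  -- RHS transformation
  have hm : m * ∑ r ∈ range (k+2), (Nat.choose (2*k+3) r : ℤ) * v (k+2-r)
      = (∑ r ∈ range (k+2), (Nat.choose (2*k+3) r : ℤ) * v (k+3-r))
        + 2 * (∑ r ∈ range (k+2), (Nat.choose (2*k+3) r : ℤ) * v (k+2-r))
        + (∑ r ∈ range (k+2), (Nat.choose (2*k+3) r : ℤ) * v (k+1-r)) := by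
    rw [Finset.mul_sum]
    have hterm : ∀ r ∈ range (k+2),
        m * ((Nat.choose (2*k+3) r : ℤ) * v (k+2-r))
          = (Nat.choose (2*k+3) r : ℤ) * v (k+3-r)
            + 2 * ((Nat.choose (2*k+3) r : ℤ) * v (k+2-r))
            + (Nat.choose (2*k+3) r : ℤ) * v (k+1-r) := by
      intro r hr
      rw [Finset.mem_range] at hr
      have := m_mul_v m (k+2) r (by omega)
      have h1 : k+2+1-r = k+3-r := by omega
      have h2 : k+2-1-r = k+1-r := by omega
      rw [h1, h2] at this
      rw [← hv] at this
      calc m * ((Nat.choose (2*k+3) r : ℤ) * v (k+2-r))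
          = (Nat.choose (2*k+3) r : ℤ) * (m * v (k+2-r)) := by ring
        _ = _ := by rw [this]; ring
    rw [Finset.sum_congr rfl hterm]
    rw [Finset.sum_add_distrib, Finset.sum_add_distrib, ← Finset.mul_sum]
  rw [hm]
  -- Q1
  have hQ1 : ∑ r ∈ range (k+2), (Nat.choose (2*k+3) r : ℤ) * v (k+3-r)
      = (∑ r ∈ range (k+1), (Nat.choose (2*k+3) (r+2) : ℤ) * v (k+1-r))
        - (Nat.choose (2*k+3) (k+2) : ℤ) * v 1
        + (2*(k:ℤ)+3) * v (k+2) + v (k+3) := by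
    rw [Finset.sum_range_succ']
    have h3 : k+3-0 = k+3 := by omega
    rw [h3]
    have hterm : ∀ r ∈ range (k+1),
        (Nat.choose (2*k+3) (r+1) : ℤ) * v (k+3-(r+1))
          = (Nat.choose (2*k+3) (r+1) : ℤ) * v (k+2-r) := by
      intro r _
      have h1 : k+3-(r+1) = k+2-r := by omega
      rw [h1]
    rw [Finset.sum_congr rfl hterm]
    rw [Finset.sum_range_succ']
    have hterm2 : ∀ r ∈ range k,
        (Nat.choose (2*k+3) (r+1+1) : ℤ) * v (k+2-(r+1))
          = (Nat.choose (2*k+3) (r+2) : ℤ) * v (k+1-r) := by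
      intro r _
      have h1 : k+2-(r+1) = k+1-r := by omega
      rw [h1]
    rw [Finset.sum_congr rfl hterm2]
    have hS3 : ∑ r ∈ range (k+1), (Nat.choose (2*k+3) (r+2) : ℤ) * v (k+1-r)
        = (∑ r ∈ range k, (Nat.choose (2*k+3) (r+2) : ℤ) * v (k+1-r))
          + (Nat.choose (2*k+3) (k+2) : ℤ) * v 1 := by
      rw [Finset.sum_range_succ]
      have h1 : k+1-k = 1 := by omega
      rw [h1]
    rw [hS3]
    have h4 : k+2-0 = k+2 := by omega
    rw [h4]
    push_cast [Nat.choose_one_right, Nat.choose_zero_right]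
    ring
  rw [hQ1]
  -- Q2
  have hQ2 : ∑ r ∈ range (k+2), (Nat.choose (2*k+3) r : ℤ) * v (k+2-r)
      = (∑ r ∈ range (k+1), (Nat.choose (2*k+3) (r+1) : ℤ) * v (k+1-r)) + v (k+2) := by
    rw [Finset.sum_range_succ']
    have hterm : ∀ r ∈ range (k+1),
        (Nat.choose (2*k+3) (r+1) : ℤ) * v (k+2-(r+1))
          = (Nat.choose (2*k+3) (r+1) : ℤ) * v (k+1-r) := by
      intro r _
      have h1 : k+2-(r+1) = k+1-r := by omega
      rw [h1]
    rw [Finset.sum_congr rfl hterm]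
    have h3 : k+2-0 = k+2 := by omega
    rw [h3]
    simp
  rw [hQ2]
  -- Q3
  have hQ3 : ∑ r ∈ range (k+2), (Nat.choose (2*k+3) r : ℤ) * v (k+1-r)
      = (∑ r ∈ range (k+1), (Nat.choose (2*k+3) r : ℤ) * v (k+1-r))
        + (Nat.choose (2*k+3) (k+1) : ℤ) * 2 := by
    rw [Finset.sum_range_succ]
    have h1 : k+1-(k+1) = 0 := by omega
    rw [h1, hv0]
  rw [hQ3, hsym, hv1]
  ring

lemma Erec' (m : ℤ) (n : ℕ) (hn : 1 ≤ n) :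
    ∑ r ∈ range (n+1), (Nat.choose (2*n+1) r : ℤ) * lucasV (m-2) 1 (n+1-r)
      = m * ∑ r ∈ range n, (Nat.choose (2*n-1) r : ℤ) * lucasV (m-2) 1 (n-r)
        + (m - 4) * (Nat.choose (2*n-1) (n-1) : ℤ) := by
  match n, hn with
  | 1, _ =>
    simp [Finset.sum_range_succ, lucasV]
    ring
  | (k+2), _ =>
    have e1 : 2*(k+2)+1 = 2*k+5 := by omega
    have e2 : 2*(k+2)-1 = 2*k+3 := by omega
    have e3 : k+2+1 = k+3 := by omega
    have e4 : k+2-1 = k+1 := by omega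
    rw [e1, e2, e3, e4]
    exact Erec m k

theorem sum_choose_lucasV' (m : ℤ) (n : ℕ) (hn : 0 < n) :
    2 * ∑ r ∈ Finset.range n, (Nat.choose (2 * n - 1) r : ℤ) * lucasV (m - 2) 1 (n - r)
      = (m - 4) * (∑ k ∈ Finset.range n, (Nat.choose (2 * k) k : ℤ) * m ^ (n - 1 - k)) + m ^ n := by
  induction n, hn using Nat.le_induction with
  | base => simp [lucasV]; ring
  | succ n hn ih =>
    have e1 : 2*(n+1)-1 = 2*n+1 := by omega
    rw [e1, Erec' m n hn]
    have hC : Nat.choose (2*n) n = 2 * Nat.choose (2*n-1) (n-1) := by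
      obtain ⟨j, rfl⟩ : ∃ j, n = j+1 := ⟨n-1, by omega⟩
      have e2 : 2*(j+1) = (2*j+1)+1 := by omega
      have e3 : (j+1) - 1 = j := by omega
      have e4 : 2*(j+1)-1 = 2*j+1 := by omega
      rw [e4, e3, e2, Nat.choose_succ_succ]
      have hsym := Nat.choose_symm (n := 2*j+1) (k := j) (by omega)
      have e5 : 2*j+1-j = j+1 := by omega
      rw [e5] at hsym
      simp only [Nat.succ_eq_add_one] at hsym ⊢
      omega
    have hS : ∑ k ∈ Finset.range (n+1), (Nat.choose (2*k) k : ℤ) * m ^ (n+1-1-k)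
        = m * (∑ k ∈ Finset.range n, (Nat.choose (2*k) k : ℤ) * m ^ (n-1-k))
          + (Nat.choose (2*n) n : ℤ) := by
      rw [Finset.sum_range_succ]
      have e6 : n+1-1-n = 0 := by omega
      rw [e6]
      rw [Finset.mul_sum]
      have hterm : ∀ k ∈ Finset.range n,
          (Nat.choose (2*k) k : ℤ) * m ^ (n+1-1-k)
            = m * ((Nat.choose (2*k) k : ℤ) * m ^ (n-1-k)) := by
        intro k hk
        rw [Finset.mem_range] at hk
        have e7 : n+1-1-k = (n-1-k)+1 := by omega
        rw [e7, pow_succ]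
        ring
      rw [Finset.sum_congr rfl hterm]
      simp
    rw [hS, hC]
    push_cast
    linear_combination m * ih
end
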